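/- Let P and Q be non-constant complex polynomials. The bivariate polynomial P(x)·Q(y) − 1 is reducible over ℂ if and only if there exist an integer d > 1 and complex polynomials P₁ and Q₁ such that P = P₁^d and Q = Q₁^d. -/

import Mathlib

/-- A bivariate polynomial is reducible if it is a product of two non-constant
polynomials. -/
def MvPolynomial.IsReducibleOverC (F : MvPolynomial (Fin 2) ℂ) : Prop :=
  ∃ G H : MvPolynomial (Fin 2) ℂ, 0 < G.totalDegree ∧ 0 < H.totalDegree ∧ F = G * H

/-!
If `P = P₁ ^ d` and `Q = Q₁ ^ d`, then `u ^ d - 1` with `u = P₁(x) Q₁(y)` is divisible by `u - 1`.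

Conversely, let `P(x) Q(y) - 1 = G H`, with `n = deg Q`, `p = deg P`. View it as a polynomial in
`y` over `ℂ[x]`. For a root `β` of `P` of multiplicity `e`, its Newton polygon with respect to
`ord_{x = β}` is the segment from `(0, 0)` to `(n, e)`, so by Gauss's lemma for the weighted Gauss
norm the leading coefficient of `G` lies on that segment too, at abscissa `k = deg_y G`:
`n · ord_β (lc_y G) = k · ord_β P`. Summing over `β` gives `n · deg (lc_y G) = k · p`, and as
`deg (lc_y G) ≤ m = deg_x G`, the symmetric argument forces `n m = p k`, with `0 < k < n`.
Hence `d = n / gcd(n, k) > 1` divides every root multiplicity of `P` and of `Q`.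
-/

theorem Nat.exists_one_lt_forall_dvd_of_dvd_mul {n k : ℕ} (hk : 0 < k) (hkn : k < n) :
    ∃ d, 1 < d ∧ ∀ e, n ∣ k * e → d ∣ e := by
  set g := n.gcd k
  have hg : 0 < g := Nat.gcd_pos_of_pos_right n hk
  refine ⟨n / g, ?_, fun e he => ?_⟩
  · obtain ⟨t, ht⟩ : g ∣ n := Nat.gcd_dvd_left n k
    have hgk : g ≤ k := Nat.le_of_dvd hk (Nat.gcd_dvd_right n k)
    rw [ht, Nat.mul_div_cancel_left t hg]
    by_contra! h
    interval_cases t <;> omega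
  · refine (Nat.coprime_div_gcd_div_gcd hg).dvd_of_dvd_mul_left ?_
    rw [← Nat.mul_div_right_comm (Nat.gcd_dvd_right n k)]
    exact Nat.div_dvd_div (Nat.gcd_dvd_left n k) he

open Polynomial

namespace Polynomial

section RootMultiplicityAbv

variable {R : Type*} [CommRing R]

open scoped Classical in
noncomputable def rootMultiplicityAbvFun (β : R) (s : ℕ) (f : R[X]) : ℝ :=
  if f = 0 then 0 else ((2 : ℝ) ^ (s * rootMultiplicity β f))⁻¹

theorem isNonarchimedean_rootMultiplicityAbvFun (β : R) (s : ℕ) :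
    IsNonarchimedean (rootMultiplicityAbvFun β s) := by
  intro f g
  by_cases hfg : f + g = 0
  · simp only [rootMultiplicityAbvFun, hfg, if_true]
    apply le_max_of_le_left
    split_ifs <;> positivity
  by_cases hf : f = 0
  · simp [hf]
  by_cases hg : g = 0
  · simp [hg]
  have hanti : Antitone fun m : ℕ => ((2 : ℝ) ^ (s * m))⁻¹ := fun a b hab =>
    inv_anti₀ (by positivity) (pow_le_pow_right₀ one_le_two (Nat.mul_le_mul_left s hab))
  simp only [rootMultiplicityAbvFun, hf, hg, hfg, if_false]
  exact (hanti (rootMultiplicity_add β hfg)).trans_eq hanti.map_min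

variable [IsDomain R]

noncomputable def rootMultiplicityAbv (β : R) (s : ℕ) : AbsoluteValue R[X] ℝ where
  toFun := rootMultiplicityAbvFun β s
  map_mul' f g := by
    by_cases hf : f = 0
    · simp [rootMultiplicityAbvFun, hf]
    by_cases hg : g = 0
    · simp [rootMultiplicityAbvFun, hg]
    simp [rootMultiplicityAbvFun, hf, hg, rootMultiplicity_mul (mul_ne_zero hf hg), mul_add,
      pow_add, mul_comm]
  nonneg' f := by
    unfold rootMultiplicityAbvFun
    split_ifs <;> positivity
  eq_zero' f := by
    unfold rootMultiplicityAbvFun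
    split_ifs with hf <;> simp [hf]
  add_le' _ _ := (isNonarchimedean_rootMultiplicityAbvFun β s).add_le fun f => by
    unfold rootMultiplicityAbvFun
    split_ifs <;> positivity

theorem isNonarchimedean_rootMultiplicityAbv (β : R) (s : ℕ) :
    IsNonarchimedean (rootMultiplicityAbv β s) :=
  isNonarchimedean_rootMultiplicityAbvFun β s

theorem rootMultiplicityAbv_apply {β : R} {s : ℕ} {f : R[X]} (hf : f ≠ 0) :
    rootMultiplicityAbv β s f = ((2 : ℝ) ^ (s * rootMultiplicity β f))⁻¹ := by
  simp [rootMultiplicityAbv, rootMultiplicityAbvFun, hf]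

theorem rootMultiplicityAbv_le_one (β : R) (s : ℕ) (f : R[X]) :
    rootMultiplicityAbv β s f ≤ 1 := by
  by_cases hf : f = 0
  · simp [hf]
  rw [rootMultiplicityAbv_apply hf]
  exact inv_le_one_of_one_le₀ (one_le_pow₀ one_le_two)

theorem rootMultiplicityAbv_eq_one {β : R} {s : ℕ} {f : R[X]} (hf : f.eval β ≠ 0) :
    rootMultiplicityAbv β s f = 1 := by
  rw [rootMultiplicityAbv_apply (fun h => hf (by simp [h])), rootMultiplicity_eq_zero hf]
  simp

theorem rootMultiplicityAbv_mul_pow_le_one_iff {β : R} {s e i : ℕ} {f : R[X]} (hf : f ≠ 0) :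
    rootMultiplicityAbv β s f * (2 ^ e) ^ i ≤ 1 ↔ e * i ≤ s * rootMultiplicity β f := by
  rw [rootMultiplicityAbv_apply hf, ← pow_mul, inv_mul_le_one₀ (by positivity),
    pow_le_pow_iff_right₀ one_lt_two]

theorem rootMultiplicityAbv_mul_pow_eq_one_iff {β : R} {s e i : ℕ} {f : R[X]} (hf : f ≠ 0) :
    rootMultiplicityAbv β s f * (2 ^ e) ^ i = 1 ↔ e * i = s * rootMultiplicity β f := by
  rw [rootMultiplicityAbv_apply hf, ← pow_mul, inv_mul_eq_one₀ (by positivity),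
    (pow_right_injective₀ two_pos (by norm_num)).eq_iff, eq_comm]

end RootMultiplicityAbv

theorem abv_leadingCoeff_mul_pow_eq_one_of_mul {R : Type*} [CommRing R] [IsDomain R]
    {v : AbsoluteValue R ℝ} (hna : IsNonarchimedean v) {c : ℝ} (hc : 0 < c) {G H : R[X]}
    (hGH : (G * H).gaussNorm v c ≤ 1)
    (hlead : v (G * H).leadingCoeff * c ^ (G * H).natDegree = 1)
    (hG : 1 ≤ G.gaussNorm v c) (hH : 1 ≤ H.gaussNorm v c) :
    v G.leadingCoeff * c ^ G.natDegree = 1 := by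
  have hG0 : G ≠ 0 := by rintro rfl; simp at hG; linarith
  have hH0 : H ≠ 0 := by rintro rfl; simp at hH; linarith
  rw [gaussNorm_mul hna hc] at hGH
  have hG1 : G.gaussNorm v c ≤ 1 := by nlinarith
  have hH1 : H.gaussNorm v c ≤ 1 := by nlinarith
  have hGt : v G.leadingCoeff * c ^ G.natDegree ≤ 1 := (le_gaussNorm v G hc.le _).trans hG1
  have hHt : v H.leadingCoeff * c ^ H.natDegree ≤ 1 := (le_gaussNorm v H hc.le _).trans hH1
  have hprod :
      (v G.leadingCoeff * c ^ G.natDegree) * (v H.leadingCoeff * c ^ H.natDegree) = 1 := by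
    rw [← hlead, leadingCoeff_mul, natDegree_mul hG0 hH0, map_mul, pow_add]
    ring
  have hGt0 : 0 ≤ v G.leadingCoeff * c ^ G.natDegree := by positivity
  exact le_antisymm hGt (by nlinarith [mul_le_mul_of_nonneg_left hHt hGt0])

section IsAlgClosed

variable {K : Type*} [Field K] [IsAlgClosed K]

theorem mul_natDegree_eq_of_forall_mul_rootMultiplicity_eq {f g : K[X]} {a b : ℕ}
    (h : ∀ β, a * rootMultiplicity β f = b * rootMultiplicity β g) :
    a * f.natDegree = b * g.natDegree := by
  classical
  have hroots : a • f.roots = b • g.roots :=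
    Multiset.ext.mpr fun β => by simp only [Multiset.count_nsmul, count_roots, h]
  simpa [IsAlgClosed.card_roots_eq_natDegree] using congrArg Multiset.card hroots

theorem exists_eq_pow_of_forall_dvd_rootMultiplicity {f : K[X]} {d : ℕ} (hd : 0 < d)
    (h : ∀ β, d ∣ rootMultiplicity β f) : ∃ f₁, f = f₁ ^ d := by
  classical
  obtain ⟨c, hc⟩ := IsAlgClosed.exists_pow_nat_eq f.leadingCoeff hd
  refine ⟨C c * ∏ β ∈ f.roots.toFinset, (X - C β) ^ (rootMultiplicity β f / d), ?_⟩
  conv_lhs => rw [← C_leadingCoeff_mul_prod_multiset_X_sub_C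
    (IsAlgClosed.card_roots_eq_natDegree (p := f))]
  rw [Finset.prod_multiset_map_count, mul_pow, ← C_pow, hc, ← Finset.prod_pow]
  congr 1
  refine Finset.prod_congr rfl fun β _ => ?_
  rw [← pow_mul, count_roots, Nat.div_mul_cancel (h β)]

end IsAlgClosed

end Polynomial

open scoped Polynomial.Bivariate

namespace Polynomial.Bivariate

section CommRing

variable {R : Type*} [CommRing R]

theorem coeff_coeff_swap (G : R[X][Y]) (i j : ℕ) :
    ((swap G).coeff i).coeff j = (G.coeff j).coeff i := by
  induction G using Polynomial.induction_on' with
  | add p q hp hq => simp [hp, hq]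
  | monomial n f =>
    induction f using Polynomial.induction_on' with
    | add p q hp hq => simp_all [map_add]
    | monomial m r =>
      rw [swap_monomial_monomial]
      simp only [coeff_monomial]
      split_ifs <;> simp_all [coeff_monomial]

theorem natDegree_leadingCoeff_le_natDegree_swap (G : R[X][Y]) :
    G.leadingCoeff.natDegree ≤ (swap G).natDegree := by
  rw [natDegree_le_iff_coeff_eq_zero]
  intro N hN
  rw [leadingCoeff, ← coeff_coeff_swap, coeff_eq_zero_of_natDegree_lt hN, coeff_zero]

theorem exists_eq_C_C_of_natDegree_eq_zero {G : R[X][Y]} (hG : G.natDegree = 0)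
    (hG' : (swap G).natDegree = 0) : ∃ c, G = C (C c) := by
  obtain ⟨g, rfl⟩ := natDegree_eq_zero.1 hG
  rw [swap_C, natDegree_map_eq_of_injective C_injective] at hG'
  obtain ⟨c, rfl⟩ := natDegree_eq_zero.1 hG'
  exact ⟨c, rfl⟩

theorem totalDegree_equivMvPolynomial_pos_iff {G : R[X][Y]} :
    0 < (equivMvPolynomial R G).totalDegree ↔ ∀ c, G ≠ C (C c) := by
  rw [pos_iff_ne_zero, Ne, MvPolynomial.totalDegree_eq_zero_iff_eq_C, not_iff_comm]
  simp only [not_forall, not_not]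
  constructor
  · rintro ⟨c, rfl⟩
    simp
  · intro h
    exact ⟨_, (equivMvPolynomial R).injective (by rw [h, equivMvPolynomial_C_C])⟩

noncomputable def prodSubOne (P Q : R[X]) : R[X][Y] := C P * Q.map C - 1

theorem coeff_prodSubOne (P Q : R[X]) (i : ℕ) :
    (prodSubOne P Q).coeff i = P * C (Q.coeff i) - if i = 0 then 1 else 0 := by
  simp [prodSubOne, coeff_one, coeff_C_mul]

theorem swap_prodSubOne (P Q : R[X]) : swap (prodSubOne P Q) = prodSubOne Q P := by
  simp only [prodSubOne, map_sub, map_mul, map_one, swap_C, swap_map_C, mul_comm]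

theorem prodSubOne_swap_eq_mul {P Q : R[X]} {G H : R[X][Y]} (h : prodSubOne P Q = G * H) :
    prodSubOne Q P = swap G * swap H := by
  rw [← swap_prodSubOne, h, map_mul]

theorem prodSubOne_pow_eq_mul (P Q : R[X]) (d : ℕ) :
    prodSubOne (P ^ d) (Q ^ d) =
      (∑ i ∈ Finset.range d, (C P * Q.map C) ^ i) * prodSubOne P Q := by
  rw [prodSubOne, prodSubOne, geom_sum_mul, mul_pow, C_pow, Polynomial.map_pow]

theorem equivMvPolynomial_prodSubOne (P Q : R[X]) :
    equivMvPolynomial R (prodSubOne P Q) =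
      aeval (MvPolynomial.X 0) P * aeval (MvPolynomial.X 1) Q - 1 := by
  rw [prodSubOne, map_sub, map_mul, map_one]
  congr 2
  · induction P using Polynomial.induction_on' with
    | add p q hp hq => simp [hp, hq]
    | monomial n a => simp [← C_mul_X_pow_eq_monomial]
  · induction Q using Polynomial.induction_on' with
    | add p q hp hq => simp [hp, hq, Polynomial.map_add]
    | monomial n a => simp [← C_mul_X_pow_eq_monomial]

end CommRing

section IsDomain

variable {R : Type*} [CommRing R] [IsDomain R] {P Q : R[X]}

theorem natDegree_prodSubOne (hP : P ≠ 0) (Q : R[X]) :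
    (prodSubOne P Q).natDegree = Q.natDegree := by
  rw [prodSubOne, ← C_1, natDegree_sub_C, natDegree_C_mul hP,
    natDegree_map_eq_of_injective C_injective]

theorem leadingCoeff_prodSubOne (hP : P ≠ 0) (hQ : 0 < Q.natDegree) :
    (prodSubOne P Q).leadingCoeff = P * C Q.leadingCoeff := by
  rw [leadingCoeff, natDegree_prodSubOne hP, coeff_prodSubOne, if_neg hQ.ne', sub_zero]
  rfl

/- With `v = 2 ^ (-n · ord_β)` and `c = 2 ^ e`, where `n = deg Q` and `e = ord_β P`, the term
`v (coeff i) * c ^ i` is at most `1` iff the point `(i, ord_β (coeff i))` lies on or above the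
line through `(0, 0)` and `(n, e)`. -/
theorem gaussNorm_prodSubOne_le_one (P Q : R[X]) (β : R) :
    (prodSubOne P Q).gaussNorm (rootMultiplicityAbv β Q.natDegree)
      (2 ^ rootMultiplicity β P) ≤ 1 := by
  obtain ⟨i, hi⟩ := exists_eq_gaussNorm (rootMultiplicityAbv β Q.natDegree)
    (2 ^ rootMultiplicity β P) (prodSubOne P Q)
  rw [hi]
  rcases eq_or_ne i 0 with rfl | hi0
  · simpa using rootMultiplicityAbv_le_one β _ _
  by_cases hc : (prodSubOne P Q).coeff i = 0
  · simp [hc]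
  rw [coeff_prodSubOne, if_neg hi0, sub_zero] at hc ⊢
  have hQi : Q.coeff i ≠ 0 := fun h => hc (by simp [h])
  rw [rootMultiplicityAbv_mul_pow_le_one_iff hc, rootMultiplicity_mul hc, rootMultiplicity_C,
    add_zero, mul_comm]
  exact Nat.mul_le_mul_right _ (le_natDegree_of_ne_zero hQi)

theorem natDegree_mul_rootMultiplicity_leadingCoeff {G H : R[X][Y]} (hP : P ≠ 0)
    (hQ : 0 < Q.natDegree) (h : prodSubOne P Q = G * H) (β : R) :
    Q.natDegree * rootMultiplicity β G.leadingCoeff = G.natDegree * rootMultiplicity β P := by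
  have hlc : G.leadingCoeff * H.leadingCoeff = P * C Q.leadingCoeff := by
    rw [← leadingCoeff_mul, ← h, leadingCoeff_prodSubOne hP hQ]
  have hlc0 : P * C Q.leadingCoeff ≠ 0 :=
    mul_ne_zero hP (C_ne_zero.2 (leadingCoeff_ne_zero.2 (ne_zero_of_natDegree_gt hQ)))
  have hord : rootMultiplicity β (P * C Q.leadingCoeff) = rootMultiplicity β P := by
    rw [rootMultiplicity_mul hlc0, rootMultiplicity_C, add_zero]
  rcases Nat.eq_zero_or_pos (rootMultiplicity β P) with he | he
  · have := rootMultiplicity_le_rootMultiplicity_of_dvd hlc0 (Dvd.intro _ hlc) β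
    rw [hord, he, Nat.le_zero] at this
    rw [this, he, mul_zero, mul_zero]
  have hF0 : ((G * H).coeff 0).eval β ≠ 0 := by
    rw [← h, coeff_prodSubOne, if_pos rfl]
    have hroot : P.eval β = 0 := (rootMultiplicity_pos hP).1 he
    simp [hroot]
  rw [mul_coeff_zero, eval_mul] at hF0
  set v := rootMultiplicityAbv β Q.natDegree
  have hone (f : R[X][Y]) (hf : (f.coeff 0).eval β ≠ 0) :
      1 ≤ f.gaussNorm v (2 ^ rootMultiplicity β P) := by
    simpa [v, rootMultiplicityAbv_eq_one hf] using le_gaussNorm v f (by positivity) 0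
  have hlead :
      v (G * H).leadingCoeff * (2 ^ rootMultiplicity β P) ^ (G * H).natDegree = 1 := by
    rw [← h, leadingCoeff_prodSubOne hP hQ, natDegree_prodSubOne hP,
      rootMultiplicityAbv_mul_pow_eq_one_iff hlc0, hord, mul_comm]
  have hG := abv_leadingCoeff_mul_pow_eq_one_of_mul (isNonarchimedean_rootMultiplicityAbv β _)
    (by positivity) (h ▸ gaussNorm_prodSubOne_le_one P Q β) hlead
    (hone G (left_ne_zero_of_mul hF0)) (hone H (right_ne_zero_of_mul hF0))
  rw [rootMultiplicityAbv_mul_pow_eq_one_iff (left_ne_zero_of_mul (hlc ▸ hlc0))] at hG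
  rw [← hG, mul_comm]

theorem exists_prodSubOne_pow_eq_mul (hP : P ≠ 0) (hQ : 0 < Q.natDegree) {d : ℕ} (hd : 1 < d) :
    ∃ G H : R[X][Y], prodSubOne (P ^ d) (Q ^ d) = G * H ∧ (∀ c, G ≠ C (C c)) ∧
      ∀ c, H ≠ C (C c) := by
  refine ⟨_, _, prodSubOne_pow_eq_mul P Q d, fun c hc => ?_, fun c hc => ?_⟩
  · have hle := natDegree_C_mul_le (C c) (prodSubOne P Q)
    rw [← hc, ← prodSubOne_pow_eq_mul, natDegree_prodSubOne (pow_ne_zero d hP),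
      natDegree_prodSubOne hP, natDegree_pow] at hle
    nlinarith
  · have := natDegree_prodSubOne hP Q
    rw [hc, natDegree_C] at this
    omega

end IsDomain

section IsAlgClosed

variable {K : Type*} [Field K] [IsAlgClosed K] {P Q : K[X]} {G H : K[X][Y]}

theorem natDegree_mul_natDegree_swap (hP : 0 < P.natDegree) (hQ : 0 < Q.natDegree)
    (h : prodSubOne P Q = G * H) :
    Q.natDegree * (swap G).natDegree = P.natDegree * G.natDegree := by
  have hY := mul_natDegree_eq_of_forall_mul_rootMultiplicity_eq
    (natDegree_mul_rootMultiplicity_leadingCoeff (ne_zero_of_natDegree_gt hP) hQ h)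
  have hX := mul_natDegree_eq_of_forall_mul_rootMultiplicity_eq
    (natDegree_mul_rootMultiplicity_leadingCoeff (ne_zero_of_natDegree_gt hQ) hP
      (prodSubOne_swap_eq_mul h))
  have hYX := Nat.mul_le_mul_left Q.natDegree (natDegree_leadingCoeff_le_natDegree_swap G)
  have hXY := Nat.mul_le_mul_left P.natDegree (natDegree_leadingCoeff_le_natDegree_swap (swap G))
  rw [swap_swap_apply] at hXY
  nlinarith

theorem natDegree_pos_of_prodSubOne_eq_mul (hP : 0 < P.natDegree) (hQ : 0 < Q.natDegree)
    (h : prodSubOne P Q = G * H) (hG : ∀ c, G ≠ C (C c)) : 0 < G.natDegree := by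
  by_contra! hG0
  have hdeg := natDegree_mul_natDegree_swap hP hQ h
  rw [Nat.le_zero.1 hG0, mul_zero, Nat.mul_eq_zero, or_iff_right hQ.ne'] at hdeg
  obtain ⟨c, hc⟩ := exists_eq_C_C_of_natDegree_eq_zero (Nat.le_zero.1 hG0) hdeg
  exact hG c hc

theorem exists_eq_pow_of_prodSubOne_eq_mul (hP : 0 < P.natDegree) (hQ : 0 < Q.natDegree)
    (h : prodSubOne P Q = G * H) (hG : ∀ c, G ≠ C (C c)) (hH : ∀ c, H ≠ C (C c)) :
    ∃ d, 1 < d ∧ ∃ P₁ Q₁ : K[X], P = P₁ ^ d ∧ Q = Q₁ ^ d := by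
  have hP0 := ne_zero_of_natDegree_gt hP
  have hQ0 := ne_zero_of_natDegree_gt hQ
  have hF : G * H ≠ 0 := fun h0 => hQ.ne (by simpa [h, h0] using natDegree_prodSubOne hP0 Q)
  have hdeg : G.natDegree + H.natDegree = Q.natDegree := by
    rw [← natDegree_prodSubOne hP0 Q, h, natDegree_mul (left_ne_zero_of_mul hF)
      (right_ne_zero_of_mul hF)]
  have hGpos := natDegree_pos_of_prodSubOne_eq_mul hP hQ h hG
  have hHpos := natDegree_pos_of_prodSubOne_eq_mul hP hQ (h.trans (mul_comm G H)) hH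
  obtain ⟨d, hd, hdvd⟩ :=
    Nat.exists_one_lt_forall_dvd_of_dvd_mul (n := Q.natDegree) hGpos (by omega)
  have hdP (β : K) : d ∣ rootMultiplicity β P :=
    hdvd _ ⟨_, (natDegree_mul_rootMultiplicity_leadingCoeff hP0 hQ h β).symm⟩
  have hdQ (β : K) : d ∣ rootMultiplicity β Q := by
    have hX := natDegree_mul_rootMultiplicity_leadingCoeff hQ0 hP (prodSubOne_swap_eq_mul h) β
    have hXY := natDegree_mul_natDegree_swap hP hQ h
    refine hdvd _ ⟨rootMultiplicity β (swap G).leadingCoeff, Nat.eq_of_mul_eq_mul_left hP ?_⟩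
    nlinarith
  obtain ⟨P₁, hP₁⟩ := exists_eq_pow_of_forall_dvd_rootMultiplicity (by omega) hdP
  obtain ⟨Q₁, hQ₁⟩ := exists_eq_pow_of_forall_dvd_rootMultiplicity (by omega) hdQ
  exact ⟨d, hd, P₁, Q₁, hP₁, hQ₁⟩

end IsAlgClosed

end Polynomial.Bivariate

open Polynomial.Bivariate in
theorem prod_sub_one_reducible_iff (P Q : Polynomial ℂ)
    (hP : 0 < P.natDegree) (hQ : 0 < Q.natDegree) :
    (Polynomial.aeval (MvPolynomial.X 0 : MvPolynomial (Fin 2) ℂ) P *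
        Polynomial.aeval (MvPolynomial.X 1 : MvPolynomial (Fin 2) ℂ) Q -
        1).IsReducibleOverC ↔
    ∃ d : ℕ, 1 < d ∧ ∃ P₁ Q₁ : Polynomial ℂ, P = P₁ ^ d ∧ Q = Q₁ ^ d := by
  set e := equivMvPolynomial ℂ
  rw [← equivMvPolynomial_prodSubOne]
  constructor
  · rintro ⟨G, H, hG, hH, hGH⟩
    rw [← e.apply_symm_apply G, totalDegree_equivMvPolynomial_pos_iff] at hG
    rw [← e.apply_symm_apply H, totalDegree_equivMvPolynomial_pos_iff] at hH
    exact exists_eq_pow_of_prodSubOne_eq_mul hP hQ (e.injective (by simp [e, hGH])) hG hH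
  · rintro ⟨d, hd, P₁, Q₁, rfl, rfl⟩
    have hP₁ : P₁ ≠ 0 := by rintro rfl; simp at hP
    rw [natDegree_pow] at hQ
    obtain ⟨G, H, hGH, hG, hH⟩ :=
      exists_prodSubOne_pow_eq_mul hP₁ (Nat.pos_of_mul_pos_left hQ) hd
    exact ⟨e G, e H, totalDegree_equivMvPolynomial_pos_iff.2 hG,
      totalDegree_equivMvPolynomial_pos_iff.2 hH, by rw [hGH, map_mul]⟩
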